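/- With notation as in the Lions–Peetre construction (X₀ ⊂ X₁ strictly embedded r.i. spaces on [0,1], E with 1-unconditional normalized basis {e_n}, parameters (m_n^{-1}),(m_n) satisfying the rapid growth condition), the space W := W_E^K(X₀,X₁) contains a sequence of normalized characteristic functions of pairwise disjoint measurable sets {A_n} ⊂ [0,1] such that {χ_{A_n}/‖χ_{A_n}‖_W} is equivalent in W to the basis {e_n} of E. -/

import Mathlib

open MeasureTheory Set Filter Topology

noncomputable section

/-- A Banach function lattice on a subset `I ⊆ ℝ` (with Lebesgue measure), encoded by
a membership predicate `Mem` and a (total) norm function `N` satisfying the lattice/ideal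
axioms on members. -/
structure BFL (I : Set ℝ) where
  Mem : (ℝ → ℝ) → Prop
  N : (ℝ → ℝ) → ℝ
  mem_meas : ∀ f, Mem f → AEMeasurable f (volume.restrict I)
  nonneg : ∀ f, 0 ≤ N f
  zero_mem : Mem 0
  zero_norm : N 0 = 0
  ideal : ∀ f g, AEMeasurable f (volume.restrict I) →
    (∀ᵐ t ∂volume.restrict I, |f t| ≤ |g t|) → Mem g → Mem f ∧ N f ≤ N g
  add_mem : ∀ f g, Mem f → Mem g → Mem (f + g)
  add_le : ∀ f g, Mem f → Mem g → N (f + g) ≤ N f + N g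
  smul_mem : ∀ (c : ℝ) f, Mem f → Mem (c • f)
  smul_norm : ∀ (c : ℝ) f, Mem f → N (c • f) = |c| * N f

/-- A rearrangement invariant (symmetric) space on `I`: a Banach function lattice whose
norm depends only on the distribution function, having the Fatou property (the paper's
standing assumption that r.i. spaces are separable or maximal). -/
structure RIS (I : Set ℝ) extends BFL I where
  symm : ∀ f g, AEMeasurable f (volume.restrict I) → Mem g →
    (∀ τ : ℝ, 0 < τ →
      (volume.restrict I) {t | τ < |f t|} = (volume.restrict I) {t | τ < |g t|}) →
    Mem f ∧ N f = N g
  fatou : ∀ (f : ℕ → ℝ → ℝ) (g : ℝ → ℝ) (C : ℝ), (∀ n, Mem (f n)) →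
    (∀ n, ∀ᵐ t ∂volume.restrict I, 0 ≤ f n t ∧ f n t ≤ f (n + 1) t) →
    (∀ᵐ t ∂volume.restrict I, Tendsto (fun n => f n t) atTop (𝓝 (g t))) →
    AEMeasurable g (volume.restrict I) → (∀ n, N (f n) ≤ C) →
    Mem g ∧ N g ≤ C

/-- The fundamental function `φ_X(t) = ‖χ_{[0,t]}‖_X` of an r.i. space on `[0,1]`. -/
def fund (X : RIS (Set.Icc (0:ℝ) 1)) (t : ℝ) : ℝ :=
  X.N ((Set.Icc (0:ℝ) t).indicator fun _ => (1:ℝ))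

/-- The Peetre K-functional `k(α, β, a; X₀, X₁)`. -/
def Kfun {I : Set ℝ} (X0 X1 : BFL I) (α β : ℝ) (a : ℝ → ℝ) : ℝ :=
  sInf {v | ∃ a0 a1, X0.Mem a0 ∧ X1.Mem a1 ∧ a = a0 + a1 ∧
    v = α * X0.N a0 + β * X1.N a1}

/-- `X₀` is strictly embedded into `X₁`: every norm-bounded sequence in `X₀` whose supports
have measure tending to `0` tends to `0` in the `X₁` norm. -/
def StrictEmb (X0 X1 : RIS (Set.Icc (0:ℝ) 1)) : Prop :=
  ∀ (x : ℕ → ℝ → ℝ) (C : ℝ), (∀ n, X0.Mem (x n)) → (∀ n, X0.N (x n) ≤ C) →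
    Tendsto (fun n => volume (Function.support (x n) ∩ Set.Icc 0 1)) atTop (𝓝 0) →
    Tendsto (fun n => X1.N (x n)) atTop (𝓝 0)
/-- A Banach space with a normalized 1-unconditional basis `{e_n}`, encoded (via the
coordinate representation) as a Banach sequence lattice: a membership predicate `Mem`
and a norm `N` on sequences which is monotone in the absolute values of coordinates
(1-unconditionality), with `N(e_n) = 1`, and such that absolutely summable coefficient
sequences belong to the space with norm at most the sum (convergence of the basis
expansion). -/
structure SeqSpace where
  Mem : (ℕ → ℝ) → Prop
  N : (ℕ → ℝ) → ℝ
  nonneg : ∀ f, 0 ≤ N f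
  mono : ∀ f g, (∀ n, |f n| ≤ |g n|) → Mem g → Mem f ∧ N f ≤ N g
  add_mem : ∀ f g, Mem f → Mem g → Mem (f + g)
  add_le : ∀ f g, Mem f → Mem g → N (f + g) ≤ N f + N g
  smul_mem : ∀ (c : ℝ) f, Mem f → Mem (c • f)
  smul_norm : ∀ (c : ℝ) f, Mem f → N (c • f) = |c| * N f
  unit_mem : ∀ n, Mem (Pi.single n 1)
  unit_norm : ∀ n, N (Pi.single n 1) = 1
  abs_le : ∀ f, (Summable fun n => |f n|) → Mem f ∧ N f ≤ ∑' n, |f n|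

/-- The Lions–Peetre coefficient vector: `n ↦ k(m_n⁻¹, m_n, x; X₀, X₁)`. -/
def LPvec (X0 X1 : BFL (Set.Icc (0:ℝ) 1)) (m : ℕ → ℝ) (x : ℝ → ℝ) : ℕ → ℝ :=
  fun n => Kfun X0 X1 (m n)⁻¹ (m n) x

/-- Membership in the sum `X₀ + X₁`. -/
def SumMem (X0 X1 : BFL (Set.Icc (0:ℝ) 1)) (x : ℝ → ℝ) : Prop :=
  ∃ a0 a1, X0.Mem a0 ∧ X1.Mem a1 ∧ x = a0 + a1

/-!
Choose disjoint sets `A_n ⊆ [0,1]` of measures `t_n` such that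
`m_n⁻² / 2 ≤ φ_{X₁}(t_n) / φ_{X₀}(t_n) ≤ m_n⁻²`; such `t_n` exist because the strict embedding makes
the ratio arbitrarily small, and the largest `t` with ratio `≤ m_n⁻²` still has ratio `≥ m_n⁻² / 2`
by subadditivity and left continuity (Fatou) of the fundamental functions.
Then the `n`-th coordinate `k(m_n⁻¹, m_n, χ_{A_n})` is comparable to `m_n⁻¹ φ_{X₀}(t_n)`, while the
other coordinates are at most `m_j m_n⁻² φ_{X₀}(t_n)` (`j < n`, through `X₁`) or
`m_j⁻¹ φ_{X₀}(t_n)` (`j > n`, through `X₀`), which by the rapid growth condition sum to at most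
`2⁻ⁿ⁻²` times the diagonal term. Hence the coefficient vector of `∑ c_n χ_{A_n} / ‖χ_{A_n}‖_W` is
`(|c_n|)` up to constants on the diagonal plus an `ℓ¹`-small error, and 1-unconditionality of
`{e_n}` gives the equivalence.
-/

local notation "χ" A:max => Set.indicator A (fun _ => (1:ℝ))
local notation "𝕀" => Set.Icc (0:ℝ) 1

section Kfunctional

variable {I : Set ℝ} {X0 X1 : BFL I} {α β : ℝ} {a : ℝ → ℝ}

theorem Kfun_le_of_eq_add (hα : 0 ≤ α) (hβ : 0 ≤ β) {a0 a1 : ℝ → ℝ} (h0 : X0.Mem a0)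
    (h1 : X1.Mem a1) (ha : a = a0 + a1) : Kfun X0 X1 α β a ≤ α * X0.N a0 + β * X1.N a1 := by
  refine csInf_le ⟨0, ?_⟩ ⟨a0, a1, h0, h1, ha, rfl⟩
  rintro _ ⟨b0, b1, -, -, -, rfl⟩
  have := X0.nonneg b0
  have := X1.nonneg b1
  positivity

theorem le_Kfun {v : ℝ} (ha : X0.Mem a) (h : ∀ a0 a1, X0.Mem a0 → X1.Mem a1 → a = a0 + a1 →
    v ≤ α * X0.N a0 + β * X1.N a1) : v ≤ Kfun X0 X1 α β a :=
  le_csInf ⟨_, a, 0, ha, X1.zero_mem, (add_zero a).symm, rfl⟩ <| by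
    rintro _ ⟨a0, a1, h0, h1, hsum, rfl⟩
    exact h a0 a1 h0 h1 hsum

theorem Kfun_nonneg (hα : 0 ≤ α) (hβ : 0 ≤ β) : 0 ≤ Kfun X0 X1 α β a := by
  refine Real.sInf_nonneg ?_
  rintro _ ⟨a0, a1, -, -, -, rfl⟩
  have := X0.nonneg a0
  have := X1.nonneg a1
  positivity

theorem Kfun_le_left (hα : 0 ≤ α) (hβ : 0 ≤ β) (ha : X0.Mem a) :
    Kfun X0 X1 α β a ≤ α * X0.N a := by
  simpa [X1.zero_norm] using Kfun_le_of_eq_add hα hβ ha X1.zero_mem (add_zero a).symm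

theorem Kfun_le_right (hα : 0 ≤ α) (hβ : 0 ≤ β) (ha : X1.Mem a) :
    Kfun X0 X1 α β a ≤ β * X1.N a := by
  simpa [X0.zero_norm] using Kfun_le_of_eq_add hα hβ X0.zero_mem ha (zero_add a).symm

theorem Kfun_add_le (hα : 0 ≤ α) (hβ : 0 ≤ β) {b : ℝ → ℝ} (ha : X0.Mem a) (hb : X0.Mem b) :
    Kfun X0 X1 α β (a + b) ≤ Kfun X0 X1 α β a + Kfun X0 X1 α β b := by
  suffices Kfun X0 X1 α β (a + b) - Kfun X0 X1 α β a ≤ Kfun X0 X1 α β b by linarith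
  refine le_Kfun hb fun b0 b1 hb0 hb1 hbsum => ?_
  suffices Kfun X0 X1 α β (a + b) - (α * X0.N b0 + β * X1.N b1) ≤ Kfun X0 X1 α β a by linarith
  refine le_Kfun ha fun a0 a1 ha0 ha1 hasum => ?_
  have hsplit : a + b = (a0 + b0) + (a1 + b1) := by rw [hasum, hbsum]; abel
  have := Kfun_le_of_eq_add hα hβ (X0.add_mem _ _ ha0 hb0) (X1.add_mem _ _ ha1 hb1) hsplit
  have := mul_le_mul_of_nonneg_left (X0.add_le _ _ ha0 hb0) hα
  have := mul_le_mul_of_nonneg_left (X1.add_le _ _ ha1 hb1) hβ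
  linarith

theorem Kfun_const_mul_le (hα : 0 ≤ α) (hβ : 0 ≤ β) (ha : X0.Mem a) (c : ℝ) :
    Kfun X0 X1 α β (fun t => c * a t) ≤ |c| * Kfun X0 X1 α β a := by
  rcases eq_or_ne c 0 with rfl | hc
  · have h00 : (fun t => 0 * a t) = 0 + 0 := by ext; simp
    simpa [X0.zero_norm, X1.zero_norm] using
      Kfun_le_of_eq_add (X1 := X1) hα hβ X0.zero_mem X1.zero_mem h00
  rw [← div_le_iff₀' (abs_pos.mpr hc)]
  refine le_Kfun ha fun a0 a1 h0 h1 hsum => ?_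
  have hsplit : (fun t => c * a t) = c • a0 + c • a1 := by rw [hsum, ← smul_add]; rfl
  have := Kfun_le_of_eq_add hα hβ (X0.smul_mem c _ h0) (X1.smul_mem c _ h1) hsplit
  rw [X0.smul_norm c _ h0, X1.smul_norm c _ h1] at this
  rw [div_le_iff₀' (abs_pos.mpr hc)]
  linarith

theorem Kfun_const_mul (hα : 0 ≤ α) (hβ : 0 ≤ β) (ha : X0.Mem a) (c : ℝ) :
    Kfun X0 X1 α β (fun t => c * a t) = |c| * Kfun X0 X1 α β a := by
  refine le_antisymm (Kfun_const_mul_le hα hβ ha c) ?_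
  rcases eq_or_ne c 0 with rfl | hc
  · simpa using Kfun_nonneg hα hβ
  have := Kfun_const_mul_le (X1 := X1) (a := fun t => c * a t) hα hβ (X0.smul_mem c a ha) c⁻¹
  simp only [inv_mul_cancel_left₀ hc, abs_inv] at this
  rwa [← le_div_iff₀' (abs_pos.mpr hc), div_eq_inv_mul]

theorem BFL.sum_mem (X : BFL I) {ι : Type*} (F : Finset ι) {f : ι → ℝ → ℝ}
    (hf : ∀ n ∈ F, X.Mem (f n)) : X.Mem (fun t => ∑ n ∈ F, f n t) := by
  classical
  induction F using Finset.induction with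
  | empty => exact X.zero_mem
  | insert n F hn ih =>
    simp only [Finset.sum_insert hn]
    exact X.add_mem (f n) _ (hf n (F.mem_insert_self n))
      (ih fun k hk => hf k (F.mem_insert_of_mem hk))

theorem Kfun_sum_le (hα : 0 ≤ α) (hβ : 0 ≤ β) {ι : Type*} (F : Finset ι) {f : ι → ℝ → ℝ}
    (hf : ∀ n ∈ F, X0.Mem (f n)) :
    Kfun X0 X1 α β (fun t => ∑ n ∈ F, f n t) ≤ ∑ n ∈ F, Kfun X0 X1 α β (f n) := by
  classical
  induction F using Finset.induction with
  | empty => simpa [← Pi.zero_def, X0.zero_norm] using Kfun_le_left (X1 := X1) hα hβ X0.zero_mem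
  | insert n F hn ih =>
    have hfn := hf n (F.mem_insert_self n)
    have hfF : ∀ k ∈ F, X0.Mem (f k) := fun k hk => hf k (F.mem_insert_of_mem hk)
    simp only [Finset.sum_insert hn]
    exact (Kfun_add_le hα hβ hfn (X0.sum_mem F hfF)).trans (add_le_add_right (ih hfF) _)

theorem Kfun_mul_le (hα : 0 ≤ α) (hβ : 0 ≤ β) (ha : X0.Mem a) {θ : ℝ → ℝ} (hθm : Measurable θ)
    (hθ : ∀ t, |θ t| ≤ 1) : Kfun X0 X1 α β (fun t => θ t * a t) ≤ Kfun X0 X1 α β a := by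
  refine le_Kfun ha fun a0 a1 h0 h1 hsum => ?_
  have hcontract : ∀ (X : BFL I) (b : ℝ → ℝ), X.Mem b →
      X.Mem (fun t => θ t * b t) ∧ X.N (fun t => θ t * b t) ≤ X.N b := fun X b hb =>
    X.ideal _ _ (hθm.aemeasurable.mul (X.mem_meas b hb)) (.of_forall fun t => by
      rw [abs_mul]; exact mul_le_of_le_one_left (abs_nonneg _) (hθ t)) hb
  obtain ⟨hm0, hN0⟩ := hcontract X0 a0 h0
  obtain ⟨hm1, hN1⟩ := hcontract X1 a1 h1
  have hsplit : (fun t => θ t * a t) = (fun t => θ t * a0 t) + (fun t => θ t * a1 t) := by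
    ext t; simp [hsum, mul_add]
  have := Kfun_le_of_eq_add hα hβ hm0 hm1 hsplit
  have := mul_le_mul_of_nonneg_left hN0 hα
  have := mul_le_mul_of_nonneg_left hN1 hβ
  linarith

end Kfunctional

section Indicators

variable {I : Set ℝ}

theorem abs_indicator_one_le {A B : Set ℝ} (hAB : A ⊆ B) (t : ℝ) : |(χ A) t| ≤ |(χ B) t| := by
  by_cases hA : t ∈ A
  · simp [hA, hAB hA]
  · by_cases hB : t ∈ B <;> simp [hA, hB]

theorem setOf_lt_abs_indicator_one {A : Set ℝ} {τ : ℝ} (hτ : 0 < τ) :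
    {t | τ < |(χ A) t|} = if τ < 1 then A else ∅ := by
  ext t
  by_cases ht : t ∈ A <;> split_ifs <;> simp [ht] <;> linarith

theorem BFL.indicator_mem_of_subset (X : BFL I) {A B : Set ℝ} (hA : MeasurableSet A)
    (hAB : A ⊆ B) (hB : X.Mem (χ B)) : X.Mem (χ A) ∧ X.N (χ A) ≤ X.N (χ B) :=
  X.ideal _ _ (measurable_const.indicator hA).aemeasurable
    (.of_forall (abs_indicator_one_le hAB)) hB

theorem RIS.indicator_congr (X : RIS I) {A B : Set ℝ} (hA : MeasurableSet A)
    (hB : MeasurableSet B) (hAB : volume (A ∩ I) = volume (B ∩ I)) (hBX : X.Mem (χ B)) :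
    X.Mem (χ A) ∧ X.N (χ A) = X.N (χ B) := by
  refine X.symm _ _ (measurable_const.indicator hA).aemeasurable hBX fun τ hτ => ?_
  rw [setOf_lt_abs_indicator_one hτ, setOf_lt_abs_indicator_one hτ]
  split_ifs
  · rwa [Measure.restrict_apply hA, Measure.restrict_apply hB]
  · rfl

end Indicators

section Fundamental

variable {X : RIS 𝕀}

theorem RIS.indicator_mem (hX : X.Mem (χ 𝕀)) {A : Set ℝ} (hA : MeasurableSet A) (hAI : A ⊆ 𝕀) :
    X.Mem (χ A) :=
  (X.indicator_mem_of_subset hA hAI hX).1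

theorem RIS.norm_indicator_eq_fund (hX : X.Mem (χ 𝕀)) {A : Set ℝ} (hA : MeasurableSet A)
    (hAI : A ⊆ 𝕀) {v : ℝ} (hv1 : v ≤ 1) (hvol : volume A = ENNReal.ofReal v) :
    X.N (χ A) = fund X v := by
  have hsub : Icc 0 v ⊆ 𝕀 := Icc_subset_Icc_right hv1
  refine (X.indicator_congr hA measurableSet_Icc ?_ (X.indicator_mem hX measurableSet_Icc hsub)).2
  rw [inter_eq_self_of_subset_left hAI, inter_eq_self_of_subset_left hsub, hvol,
    Real.volume_Icc, sub_zero]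

theorem fund_nonneg (t : ℝ) : 0 ≤ fund X t := X.nonneg _

theorem fund_zero : fund X 0 = 0 := by
  have h := X.indicator_congr (A := Icc 0 0) measurableSet_Icc MeasurableSet.empty
    (by simp) (by simpa [← Pi.zero_def] using X.zero_mem)
  rw [fund, h.2, indicator_empty, ← Pi.zero_def, X.zero_norm]

theorem fund_mono (hX : X.Mem (χ 𝕀)) {s t : ℝ} (hst : s ≤ t) (ht : t ≤ 1) :
    fund X s ≤ fund X t :=
  (X.indicator_mem_of_subset measurableSet_Icc (Icc_subset_Icc_right hst)
    (X.indicator_mem hX measurableSet_Icc (Icc_subset_Icc_right ht))).2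

theorem fund_add_le (hX : X.Mem (χ 𝕀)) {s t : ℝ} (hs : 0 ≤ s) (ht : 0 ≤ t) (hst : s + t ≤ 1) :
    fund X (s + t) ≤ fund X s + fund X t := by
  have hIcc : Icc 0 s ⊆ 𝕀 := Icc_subset_Icc_right (by linarith)
  have hIoc : Ioc s (s + t) ⊆ 𝕀 := Ioc_subset_Icc_self.trans (Icc_subset_Icc hs hst)
  have hdisj : Disjoint (Icc 0 s) (Ioc s (s + t)) :=
    disjoint_left.2 fun x hx hx' => (not_lt.2 hx.2) hx'.1
  have hsplit : χ (Icc 0 (s + t)) = χ (Icc 0 s) + χ (Ioc s (s + t)) := by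
    rw [← Icc_union_Ioc_eq_Icc hs (le_add_of_nonneg_right ht),
      indicator_union_of_disjoint hdisj]
    rfl
  have hmem := X.indicator_mem hX measurableSet_Ioc hIoc
  have hnorm : X.N (χ (Ioc s (s + t))) = fund X t :=
    X.norm_indicator_eq_fund hX measurableSet_Ioc hIoc (by linarith) (by simp)
  rw [fund, hsplit, ← hnorm]
  exact X.add_le _ _ (X.indicator_mem hX measurableSet_Icc hIcc) hmem

theorem fund_nat_mul_le (hX : X.Mem (χ 𝕀)) {t : ℝ} (ht : 0 ≤ t) :
    ∀ k : ℕ, k * t ≤ 1 → fund X (k * t) ≤ k * fund X t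
  | 0, _ => by simp [fund_zero]
  | k + 1, hk => by
    push_cast at hk ⊢
    have hkt : k * t ≤ 1 := by nlinarith
    calc fund X ((k + 1) * t) = fund X (k * t + t) := by ring_nf
      _ ≤ fund X (k * t) + fund X t := fund_add_le hX (by positivity) ht (by linarith)
      _ ≤ k * fund X t + fund X t := add_le_add_left (fund_nat_mul_le hX ht k hkt) _
      _ = (k + 1) * fund X t := by ring

theorem half_le_fund (hX : X.Mem (χ 𝕀)) (h1 : fund X 1 = 1) {t : ℝ} (ht0 : 0 < t) (ht1 : t ≤ 1) :
    t / 2 ≤ fund X t := by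
  set k := ⌊t⁻¹⌋₊
  have hkt : k * t ≤ 1 := by
    simpa [ht0.ne'] using mul_le_mul_of_nonneg_right (Nat.floor_le (inv_pos.2 ht0).le) ht0.le
  have hkt' : 1 < (k + 1) * t := by
    simpa [ht0.ne'] using mul_lt_mul_of_pos_right (Nat.lt_floor_add_one t⁻¹) ht0
  -- cover `[0, 1]` by `k` intervals of length `t` and a remainder of length less than `t`
  have hcover : 1 ≤ (k + 1) * fund X t :=
    calc (1 : ℝ) = fund X (k * t + (1 - k * t)) := by rw [add_sub_cancel, h1]
      _ ≤ fund X (k * t) + fund X (1 - k * t) :=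
          fund_add_le hX (by positivity) (by linarith) (by linarith)
      _ ≤ k * fund X t + fund X t :=
          add_le_add (fund_nat_mul_le hX ht0.le k hkt) (fund_mono hX (by linarith) ht1)
      _ = (k + 1) * fund X t := by ring
  have hk1 : (k + 1 : ℝ) ≤ 2 / t := by
    rw [le_div_iff₀ ht0]; nlinarith [hkt]
  calc t / 2 = t / 2 * 1 := (mul_one _).symm
    _ ≤ t / 2 * ((k + 1) * fund X t) := by gcongr
    _ ≤ t / 2 * (2 / t * fund X t) := by gcongr; exact fund_nonneg t
    _ = fund X t := by field_simp

theorem fund_pos (hX : X.Mem (χ 𝕀)) (h1 : fund X 1 = 1) {t : ℝ} (ht0 : 0 < t) (ht1 : t ≤ 1) :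
    0 < fund X t :=
  (half_pos ht0).trans_le (half_le_fund hX h1 ht0 ht1)

theorem fund_le_of_tendsto (hX : X.Mem (χ 𝕀)) {T : ℕ → ℝ} (hT : Monotone T) {s : ℝ} (hs : s ≤ 1)
    (hlim : Tendsto T atTop (𝓝 s)) {C : ℝ} (hC : ∀ k, fund X (T k) ≤ C) : fund X s ≤ C := by
  set U := ⋃ k, Icc 0 (T k)
  have hIcc : Monotone fun k => Icc (0:ℝ) (T k) := fun i j hij => Icc_subset_Icc_right (hT hij)
  have hTs : ∀ k, T k ≤ s := hT.ge_of_tendsto hlim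
  have hUI : U ⊆ 𝕀 := iUnion_subset fun k => Icc_subset_Icc_right ((hTs k).trans hs)
  have hUm : MeasurableSet U := MeasurableSet.iUnion fun _ => measurableSet_Icc
  have hUvol : volume U = ENNReal.ofReal s := by
    refine tendsto_nhds_unique (tendsto_measure_iUnion_atTop hIcc) ?_
    simpa [Function.comp_def] using ENNReal.tendsto_ofReal hlim
  have hconv : ∀ t, Tendsto (fun k => (χ (Icc 0 (T k))) t) atTop (𝓝 ((χ U) t)) := fun t => by
    rw [tendsto_indicator_const_apply_iff_eventually]
    by_cases ht : t ∈ U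
    · obtain ⟨k, hk⟩ := mem_iUnion.1 ht
      filter_upwards [eventually_ge_atTop k] with j hj using iff_of_true (hIcc hj hk) ht
    · exact .of_forall fun j => iff_of_false (fun hj => ht (mem_iUnion.2 ⟨j, hj⟩)) ht
  have hfatou := X.fatou _ (χ U) C
    (fun k => X.indicator_mem hX measurableSet_Icc (Icc_subset_Icc_right ((hTs k).trans hs)))
    (fun k => .of_forall fun t => ⟨indicator_nonneg (fun _ _ => zero_le_one) t,
      indicator_le_indicator_of_subset (hIcc k.le_succ) (fun _ => zero_le_one) t⟩)
    (.of_forall hconv) (measurable_const.indicator hUm).aemeasurable hC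
  rw [← X.norm_indicator_eq_fund hX hUm hUI hs hUvol]
  exact hfatou.2

end Fundamental

section StrictEmbedding

variable {X0 X1 : RIS 𝕀}

theorem StrictEmb.exists_fund_le_mul (hstrict : StrictEmb X0 X1) (hX0 : X0.Mem (χ 𝕀))
    (hX1 : X1.Mem (χ 𝕀)) (h0 : fund X0 1 = 1) {ε : ℝ} (hε : 0 < ε) :
    ∃ t, 0 < t ∧ t ≤ 1 ∧ fund X1 t ≤ ε * fund X0 t := by
  set u : ℕ → ℝ := fun k => 1 / ((k : ℝ) + 1)
  have hu0 : ∀ k, 0 < u k := fun k => by positivity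
  have hu1 : ∀ k, u k ≤ 1 := fun k => div_le_one_of_le₀ (by simp) (by positivity)
  have hulim : Tendsto u atTop (𝓝 0) := tendsto_one_div_add_atTop_nhds_zero_nat
  have hpos : ∀ k, 0 < fund X0 (u k) := fun k => fund_pos hX0 h0 (hu0 k) (hu1 k)
  set x : ℕ → ℝ → ℝ := fun k => (fund X0 (u k))⁻¹ • χ (Icc 0 (u k))
  have hmem : ∀ (X : RIS 𝕀), X.Mem (χ 𝕀) → ∀ k, X.Mem (χ (Icc 0 (u k))) := fun X hX k =>
    X.indicator_mem hX measurableSet_Icc (Icc_subset_Icc_right (hu1 k))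
  have hnorm : ∀ (X : RIS 𝕀) (hX : X.Mem (χ 𝕀)) k,
      X.N (x k) = (fund X0 (u k))⁻¹ * fund X (u k) := fun X hX k => by
    rw [X.smul_norm _ _ (hmem X hX k), abs_of_pos (inv_pos.2 (hpos k))]
    rfl
  have hsupp : Tendsto (fun k => volume (Function.support (x k) ∩ 𝕀)) atTop (𝓝 0) := by
    refine tendsto_of_tendsto_of_tendsto_of_le_of_le tendsto_const_nhds
      (by simpa using ENNReal.tendsto_ofReal hulim) (fun _ => zero_le) fun k => ?_
    calc volume (Function.support (x k) ∩ 𝕀) ≤ volume (Icc 0 (u k)) :=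
          measure_mono (inter_subset_left.trans
            ((Function.support_const_smul_subset _ _).trans support_indicator_subset))
      _ = ENNReal.ofReal (u k) := by simp
  have hx1 := hstrict x 1 (fun k => X0.smul_mem _ _ (hmem X0 hX0 k))
    (fun k => by rw [hnorm X0 hX0, inv_mul_cancel₀ (hpos k).ne']) hsupp
  obtain ⟨k, hk⟩ := (hx1.eventually (gt_mem_nhds hε)).exists
  rw [hnorm X1 hX1, inv_mul_lt_iff₀ (hpos k)] at hk
  exact ⟨u k, hu0 k, hu1 k, by linarith⟩

theorem StrictEmb.exists_fund_ratio (hstrict : StrictEmb X0 X1) (hX0 : X0.Mem (χ 𝕀))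
    (hX1 : X1.Mem (χ 𝕀)) (h0 : fund X0 1 = 1) (h1 : fund X1 1 = 1) {ε : ℝ} (hε0 : 0 < ε)
    (hε1 : ε < 1) :
    ∃ s, 0 < s ∧ s < 1 ∧ s ≤ 2 * ε ∧ ε / 2 * fund X0 s ≤ fund X1 s ∧ fund X1 s ≤ ε * fund X0 s := by
  -- take `s` maximal with `fund X1 s ≤ ε * fund X0 s`
  set S := {t | 0 < t ∧ t ≤ 1 ∧ fund X1 t ≤ ε * fund X0 t}
  obtain ⟨t0, ht0⟩ := hstrict.exists_fund_le_mul hX0 hX1 h0 hε0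
  have hSbdd : BddAbove S := ⟨1, fun t ht => ht.2.1⟩
  set s := sSup S
  have hs1 : s ≤ 1 := csSup_le ⟨t0, ht0⟩ fun t ht => ht.2.1
  have hs0 : 0 < s := ht0.1.trans_le (le_csSup hSbdd ht0)
  have hsS : fund X1 s ≤ ε * fund X0 s := by
    obtain ⟨T, hT, hlim, hTS⟩ := exists_seq_tendsto_sSup ⟨t0, ht0⟩ hSbdd
    refine fund_le_of_tendsto hX1 hT hs1 hlim fun k => (hTS k).2.2.trans ?_
    exact mul_le_mul_of_nonneg_left (fund_mono hX0 (le_csSup hSbdd (hTS k)) hs1) hε0.le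
  have hslt1 : s < 1 := by
    refine hs1.lt_of_ne fun h => ?_
    rw [h, h0, h1] at hsS
    linarith
  refine ⟨s, hs0, hslt1, ?_, ?_, hsS⟩
  · have := half_le_fund hX1 h1 hs0 hs1
    have := fund_mono hX0 hs1 le_rfl
    nlinarith
  · set r := min s (1 - s)
    have hr0 : 0 < r := lt_min hs0 (by linarith)
    have hsr : s + r ≤ 1 := by linarith [min_le_right s (1 - s)]
    have hnot : ¬ fund X1 (s + r) ≤ ε * fund X0 (s + r) := fun h =>
      (lt_add_of_pos_right s hr0).not_ge (le_csSup hSbdd ⟨by linarith, hsr, h⟩)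
    have := fund_mono hX0 (le_add_of_nonneg_right hr0.le) hsr
    have := fund_add_le hX1 hs0.le hr0.le hsr
    have := fund_mono hX1 (min_le_left s (1 - s)) hs1
    nlinarith

theorem StrictEmb.exists_seq_fund_ratio (hstrict : StrictEmb X0 X1) (hX0 : X0.Mem (χ 𝕀))
    (hX1 : X1.Mem (χ 𝕀)) (h0 : fund X0 1 = 1) (h1 : fund X1 1 = 1) {m : ℕ → ℝ}
    (hm : ∀ n, 2 ≤ m n) :
    ∃ t : ℕ → ℝ, (∀ n, 0 < t n) ∧ (∀ n, t n < 1) ∧ (∀ n, t n ≤ (m n)⁻¹) ∧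
      (∀ n, (m n ^ 2)⁻¹ / 2 * fund X0 (t n) ≤ fund X1 (t n)) ∧
      ∀ n, fund X1 (t n) ≤ (m n ^ 2)⁻¹ * fund X0 (t n) := by
  have hε : ∀ n, 0 < (m n ^ 2)⁻¹ ∧ (m n ^ 2)⁻¹ < 1 := fun n =>
    ⟨by have := hm n; positivity, inv_lt_one_of_one_lt₀ (by nlinarith [hm n])⟩
  choose t ht0 ht1 ht2 hlow hhigh using fun n =>
    hstrict.exists_fund_ratio hX0 hX1 h0 h1 (hε n).1 (hε n).2
  refine ⟨t, ht0, ht1, fun n => (ht2 n).trans ?_, hlow, hhigh⟩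
  have := hm n
  field_simp
  nlinarith

end StrictEmbedding

theorem fund_div_four_le_norm {X : RIS 𝕀} (hX : X.Mem (χ 𝕀)) {b : ℝ → ℝ} (hb : X.Mem b)
    {B : Set ℝ} (hB : MeasurableSet B) (hBI : B ⊆ 𝕀) {v : ℝ} (hv0 : 0 ≤ v) (hv1 : v ≤ 1)
    (hvB : ENNReal.ofReal (v / 2) ≤ volume B)
    (hbB : ∀ᵐ t ∂volume.restrict 𝕀, t ∈ B → 1 / 2 ≤ |b t|) : fund X v / 4 ≤ X.N b := by
  have hBfin : volume B ≠ ⊤ := measure_ne_top_of_subset hBI (by simp)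
  set w := (volume B).toReal
  have hvw : v / 2 ≤ w := by
    simpa [ENNReal.toReal_ofReal (by linarith : 0 ≤ v / 2)] using ENNReal.toReal_mono hBfin hvB
  have hw1 : w ≤ 1 := by
    simpa using ENNReal.toReal_mono (by simp) (measure_mono (μ := volume) hBI)
  have hχB := X.indicator_mem hX hB hBI
  have hideal := X.ideal ((1 / 2 : ℝ) • χ B) b
    ((measurable_const.indicator hB).const_smul _).aemeasurable (hbB.mono fun t ht => by
      by_cases htB : t ∈ B
      · simpa [htB] using ht htB
      · simp [htB]) hb
  rw [X.smul_norm _ _ hχB,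
    X.norm_indicator_eq_fund hX hB hBI hw1 (ENNReal.ofReal_toReal hBfin).symm] at hideal
  have := fund_mono hX hvw hw1
  have := fund_add_le hX (s := v / 2) (t := v / 2) (by positivity) (by positivity) (by linarith)
  rw [add_halves] at this
  norm_num at hideal
  linarith

theorem min_div_four_le_Kfun_indicator {X0 X1 : RIS 𝕀} (hX0 : X0.Mem (χ 𝕀)) (hX1 : X1.Mem (χ 𝕀))
    {A : Set ℝ} (hA : MeasurableSet A) (hAI : A ⊆ 𝕀) {v : ℝ} (hv0 : 0 ≤ v) (hv1 : v ≤ 1)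
    (hvol : volume A = ENNReal.ofReal v) {α β : ℝ} (hα : 0 ≤ α) (hβ : 0 ≤ β) :
    min (α * fund X0 v) (β * fund X1 v) / 4 ≤ Kfun X0.toBFL X1.toBFL α β (χ A) := by
  refine le_Kfun (X0.indicator_mem hX0 hA hAI) fun a0 a1 h0 h1 hsum => ?_
  have ha0 := X0.mem_meas a0 h0
  -- on `A`, `a0 + a1 = 1`, so `A` splits into a part where `|a0| ≥ 1/2` and one where `|a1| ≥ 1/2`
  set C := {t | 1 / 2 ≤ |ha0.mk a0 t|}
  have hC : MeasurableSet C := measurableSet_le measurable_const ha0.measurable_mk.abs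
  have hsplit := measure_inter_add_sdiff (μ := volume) A hC
  have hN0 := X0.nonneg a0
  have hN1 := X1.nonneg a1
  rcases le_or_gt (ENNReal.ofReal (v / 2)) (volume (A ∩ C)) with hAC | hAC
  · have := fund_div_four_le_norm hX0 h0 (hA.inter hC) (inter_subset_left.trans hAI) hv0 hv1 hAC
      (by filter_upwards [ha0.ae_eq_mk] with t ht htAC using ht ▸ htAC.2)
    have := mul_le_mul_of_nonneg_left this hα
    have := min_le_left (α * fund X0 v) (β * fund X1 v)
    nlinarith
  · have hAC' : ENNReal.ofReal (v / 2) ≤ volume (A \ C) := by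
      by_contra! h
      have := ENNReal.add_lt_add hAC h
      rw [hsplit, hvol, ← ENNReal.ofReal_add (by linarith) (by linarith), add_halves] at this
      exact this.false
    have := fund_div_four_le_norm hX1 h1 (hA.diff hC) (sdiff_subset.trans hAI) hv0 hv1 hAC'
      (by
        filter_upwards [ha0.ae_eq_mk] with t ht htAC
        have hone : a0 t + a1 t = 1 := by simpa [htAC.1] using (congrFun hsum t).symm
        have hsmall : |a0 t| < 1 / 2 := by simpa [C, ht] using htAC.2
        rw [show a1 t = 1 - a0 t by linarith]
        linarith [abs_sub_abs_le_abs_sub 1 (a0 t), abs_one (α := ℝ)])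
    have := mul_le_mul_of_nonneg_left this hβ
    have := min_le_right (α * fund X0 v) (β * fund X1 v)
    nlinarith

namespace SeqSpace

variable (E : SeqSpace)

theorem abs_apply_le_norm {f : ℕ → ℝ} (hf : E.Mem f) (j : ℕ) : |f j| ≤ E.N f := by
  have hsingle : Pi.single j (f j) = f j • (Pi.single j 1 : ℕ → ℝ) := by
    rw [← Pi.single_smul, smul_eq_mul, mul_one]
  have hle := E.mono (Pi.single j (f j)) f (fun n => by
    rcases eq_or_ne n j with rfl | h <;> simp [*]) hf
  rw [hsingle, E.smul_norm _ _ (E.unit_mem j), E.unit_norm, mul_one] at hle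
  exact hle.2

theorem mem_and_norm_le_tsum {f : ℕ → ℝ} (hf0 : ∀ n, 0 ≤ f n) (hf : Summable f) :
    E.Mem f ∧ E.N f ≤ ∑' n, f n := by
  simpa only [abs_of_nonneg (hf0 _)] using E.abs_le f (by simpa only [abs_of_nonneg (hf0 _)])

theorem finsupp_mem (c : ℕ →₀ ℝ) : E.Mem c :=
  (E.abs_le c (summable_of_ne_finset_zero (s := c.support) fun n hn => by
    simp [Finsupp.notMem_support_iff.1 hn])).1

theorem mul_norm_le_of_mul_abs_le {f g : ℕ → ℝ} (hf : E.Mem f) (hg : E.Mem g) {δ : ℝ} (hδ : 0 ≤ δ)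
    (h : ∀ j, δ * |f j| ≤ |g j|) : δ * E.N f ≤ E.N g := by
  have := (E.mono (δ • f) g (fun j => by simpa [abs_mul, abs_of_nonneg hδ] using h j) hg).2
  rwa [E.smul_norm _ _ hf, abs_of_nonneg hδ] at this

theorem norm_mem_Icc_of_le_single_add {f r : ℕ → ℝ} {n : ℕ} {δ d : ℝ} (hf0 : ∀ j, 0 ≤ f j)
    (hδ : δ ≤ f n) (hd : f n ≤ d) (hr0 : ∀ j, 0 ≤ r j) (hr : Summable r)
    (hoff : ∀ j, j ≠ n → f j ≤ r j) : E.Mem f ∧ δ ≤ E.N f ∧ E.N f ≤ d + ∑' j, r j := by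
  have hsingle : Summable (Pi.single n d : ℕ → ℝ) := (hasSum_pi_single n d).summable
  have hle : ∀ j, f j ≤ (Pi.single n d : ℕ → ℝ) j + r j := fun j => by
    rcases eq_or_ne j n with rfl | h
    · simpa using hd.trans (le_add_of_nonneg_right (hr0 j))
    · simpa [h] using hoff j h
  obtain ⟨hmem, hnorm⟩ := E.mem_and_norm_le_tsum hf0
    (Summable.of_nonneg_of_le hf0 hle (hsingle.add hr))
  refine ⟨hmem, hδ.trans ((le_abs_self _).trans (E.abs_apply_le_norm hmem n)), hnorm.trans ?_⟩
  calc ∑' j, f j ≤ ∑' j, ((Pi.single n d : ℕ → ℝ) j + r j) :=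
        Summable.tsum_le_tsum hle (.of_nonneg_of_le hf0 hle (hsingle.add hr)) (hsingle.add hr)
    _ = d + ∑' j, r j := by rw [Summable.tsum_add hsingle hr, tsum_pi_single]

theorem norm_mem_Icc_of_diag_dominant {u r : ℕ → ℕ → ℝ} {d ε : ℕ → ℝ}
    (hu0 : ∀ n j, 0 ≤ u n j) (hε0 : ∀ n, 0 ≤ ε n) (hε : Summable ε) (hεsum : ∑' n, ε n ≤ 1 / 2)
    (hdiag_ge : ∀ n, d n / 8 ≤ u n n) (hdiag_le : ∀ n, u n n ≤ d n)
    (hoff : ∀ n j, j ≠ n → u n j ≤ r n j) (hr0 : ∀ n j, 0 ≤ r n j) (hr : ∀ n, Summable (r n))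
    (hrsum : ∀ n, ∑' j, r n j ≤ d n * ε n) (n : ℕ) :
    d n / 8 ≤ E.N (u n) ∧ E.N (u n) ≤ 3 / 2 * d n := by
  obtain ⟨-, hlo, hhi⟩ :=
    E.norm_mem_Icc_of_le_single_add (hu0 n) (hdiag_ge n) (hdiag_le n) (hr0 n) (hr n) (hoff n)
  have hd : 0 ≤ d n := (hu0 n n).trans (hdiag_le n)
  have := mul_le_mul_of_nonneg_left ((hε.le_tsum n fun j _ => hε0 j).trans hεsum) hd
  exact ⟨hlo, by linarith [hrsum n]⟩

theorem summable_and_tsum_sum_abs_mul_le (c : ℕ →₀ ℝ) {r : ℕ → ℕ → ℝ} {ε : ℕ → ℝ}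
    (hr0 : ∀ n j, 0 ≤ r n j) (hr : ∀ n, Summable (r n)) (hrε : ∀ n, ∑' j, r n j ≤ ε n)
    (hε : Summable ε) :
    Summable (fun j => ∑ n ∈ c.support, |c n| * r n j) ∧
      ∑' j, ∑ n ∈ c.support, |c n| * r n j ≤ (∑' n, ε n) * E.N c := by
  refine ⟨summable_sum fun n _ => (hr n).mul_left _, ?_⟩
  have hε0 : ∀ n, 0 ≤ ε n := fun n => (tsum_nonneg (hr0 n)).trans (hrε n)
  rw [Summable.tsum_finsetSum fun n _ => (hr n).mul_left _]
  calc ∑ n ∈ c.support, ∑' j, |c n| * r n j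
      = ∑ n ∈ c.support, |c n| * ∑' j, r n j := by simp only [tsum_mul_left]
    _ ≤ ∑ n ∈ c.support, E.N c * ε n := Finset.sum_le_sum fun n _ =>
        mul_le_mul (E.abs_apply_le_norm (E.finsupp_mem c) n) (hrε n) (tsum_nonneg (hr0 n))
          (E.nonneg _)
    _ ≤ E.N c * ∑' n, ε n := by
        rw [← Finset.mul_sum]
        exact mul_le_mul_of_nonneg_left (hε.sum_le_tsum _ fun n _ => hε0 n) (E.nonneg _)
    _ = (∑' n, ε n) * E.N c := mul_comm _ _

-- the diagonal part is estimated in `E`, the off-diagonal part in `ℓ¹`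
theorem norm_le_of_le_sum_mul (c : ℕ →₀ ℝ) {V : ℕ → ℝ} {B r : ℕ → ℕ → ℝ} {M : ℝ} {ε : ℕ → ℝ}
    (hV0 : ∀ j, 0 ≤ V j) (hV : ∀ j, V j ≤ ∑ n ∈ c.support, |c n| * B n j) (hM : 0 ≤ M)
    (hdiag : ∀ n, B n n ≤ M) (hoff : ∀ n j, j ≠ n → B n j ≤ r n j) (hr0 : ∀ n j, 0 ≤ r n j)
    (hr : ∀ n, Summable (r n)) (hrε : ∀ n, ∑' j, r n j ≤ ε n) (hε : Summable ε) :
    E.Mem V ∧ E.N V ≤ (M + ∑' n, ε n) * E.N c := by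
  set R : ℕ → ℝ := fun j => ∑ n ∈ c.support, |c n| * r n j
  have hR0 : ∀ j, 0 ≤ R j := fun j => Finset.sum_nonneg fun n _ => by
    have := hr0 n j; positivity
  obtain ⟨hRsum, hRtsum⟩ := E.summable_and_tsum_sum_abs_mul_le c hr0 hr hrε hε
  have hVR : ∀ j, V j ≤ M * |c j| + R j := fun j => by
    refine (hV j).trans ?_
    calc ∑ n ∈ c.support, |c n| * B n j
        ≤ ∑ n ∈ c.support, ((if n = j then M * |c n| else 0) + |c n| * r n j) := by
          refine Finset.sum_le_sum fun n _ => ?_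
          rcases eq_or_ne n j with rfl | h
          · have := mul_le_mul_of_nonneg_left (hdiag n) (abs_nonneg (c n))
            have := hr0 n n
            simp only [if_true]; nlinarith [abs_nonneg (c n)]
          · simpa [h] using mul_le_mul_of_nonneg_left (hoff n j (Ne.symm h)) (abs_nonneg (c n))
      _ ≤ M * |c j| + R j := by
          rw [Finset.sum_add_distrib, Finset.sum_ite_eq']
          split_ifs <;> simp [R, mul_nonneg hM (abs_nonneg (c j))]
  obtain ⟨hRmem, hRnorm⟩ := E.mem_and_norm_le_tsum hR0 hRsum
  have habs := E.mono (fun j => |c j|) c (fun j => (abs_abs _).le) (E.finsupp_mem c)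
  have hMc := E.smul_mem M _ habs.1
  have hVg := E.mono V (M • (fun j => |c j|) + R) (fun j => by
    simp only [Pi.add_apply, Pi.smul_apply, smul_eq_mul]
    rw [abs_of_nonneg (hV0 j), abs_of_nonneg (by have := hR0 j; positivity)]
    exact hVR j) (E.add_mem _ _ hMc hRmem)
  refine ⟨hVg.1, hVg.2.trans ((E.add_le _ _ hMc hRmem).trans ?_)⟩
  rw [E.smul_norm _ _ habs.1, abs_of_nonneg hM]
  nlinarith [mul_le_mul_of_nonneg_left habs.2 hM]

end SeqSpace

section Blocks

variable {I : Set ℝ} {X0 X1 : BFL I} {α β : ℝ} {ι : Type*} (F : Finset ι) {A : ι → Set ℝ}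
  (b : ι → ℝ)

theorem Kfun_sum_indicator_le (hα : 0 ≤ α) (hβ : 0 ≤ β) (hA : ∀ n ∈ F, X0.Mem (χ (A n))) :
    Kfun X0 X1 α β (fun t => ∑ n ∈ F, b n * (χ (A n)) t)
      ≤ ∑ n ∈ F, |b n| * Kfun X0 X1 α β (χ (A n)) :=
  (Kfun_sum_le hα hβ F fun n hn => X0.smul_mem (b n) _ (hA n hn)).trans
    (Finset.sum_le_sum fun n hn => Kfun_const_mul_le hα hβ (hA n hn) (b n))

theorem abs_mul_Kfun_indicator_le_sum (hα : 0 ≤ α) (hβ : 0 ≤ β)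
    (hAm : ∀ n, MeasurableSet (A n)) (hAdisj : Pairwise fun i j => Disjoint (A i) (A j))
    (hA : ∀ n ∈ F, X0.Mem (χ (A n))) {j : ι} (hj : j ∈ F) :
    |b j| * Kfun X0 X1 α β (χ (A j)) ≤ Kfun X0 X1 α β (fun t => ∑ n ∈ F, b n * (χ (A n)) t) := by
  have hrestrict : (fun t => (χ (A j)) t * ∑ n ∈ F, b n * (χ (A n)) t)
      = fun t => b j * (χ (A j)) t := by
    ext t
    by_cases ht : t ∈ A j
    · rw [Finset.sum_eq_single j (fun n _ hnj => by simp [(hAdisj hnj).notMem_of_mem_right ht])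
        (absurd hj)]
      simp [ht]
    · simp [ht]
  rw [← Kfun_const_mul hα hβ (hA j hj) (b j), ← hrestrict]
  refine Kfun_mul_le hα hβ (X0.sum_mem F fun n hn => X0.smul_mem (b n) _ (hA n hn))
    (measurable_const.indicator (hAm j)) fun t => ?_
  by_cases ht : t ∈ A j <;> simp [ht]

end Blocks

theorem exists_pairwise_disjoint_volume_eq {t : ℕ → ℝ} (ht0 : ∀ n, 0 ≤ t n) (ht : Summable t)
    (ht1 : ∑' n, t n ≤ 1) :
    ∃ A : ℕ → Set ℝ, (∀ n, MeasurableSet (A n)) ∧ (∀ n, A n ⊆ 𝕀) ∧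
      (Pairwise fun i j => Disjoint (A i) (A j)) ∧ ∀ n, volume (A n) = ENNReal.ofReal (t n) := by
  set a : ℕ → ℝ := fun n => ∑ i ∈ Finset.range n, t i
  have ha : Monotone a := fun i j hij =>
    Finset.sum_le_sum_of_subset_of_nonneg (Finset.range_subset_range.2 hij) fun k _ _ => ht0 k
  refine ⟨fun n => Ico (a n) (a (n + 1)), fun n => measurableSet_Ico, fun n x hx =>
    ⟨(Finset.sum_nonneg fun i _ => ht0 i).trans hx.1,
      hx.2.le.trans ((ht.sum_le_tsum _ fun i _ => ht0 i).trans ht1)⟩,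
    fun i j hij => by simpa only [Order.succ_eq_add_one] using ha.pairwise_disjoint_on_Ico_succ hij,
    fun n => by simp [a, Finset.sum_range_succ]⟩

theorem LPvec_indicator_equiv_basis (E : SeqSpace) {X0 X1 : BFL 𝕀} {m : ℕ → ℝ}
    (hm : ∀ n, 0 < m n) {A : ℕ → Set ℝ} (hAm : ∀ n, MeasurableSet (A n))
    (hAdisj : Pairwise fun i j => Disjoint (A i) (A j)) (hA0 : ∀ n, X0.Mem (χ (A n)))
    {d ε : ℕ → ℝ} {r : ℕ → ℕ → ℝ} (hd : ∀ n, 0 < d n) (hε0 : ∀ n, 0 ≤ ε n) (hε : Summable ε)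
    (hεsum : ∑' n, ε n ≤ 1 / 2) (hdiag_ge : ∀ n, d n / 8 ≤ LPvec X0 X1 m (χ (A n)) n)
    (hdiag_le : ∀ n, LPvec X0 X1 m (χ (A n)) n ≤ d n)
    (hoff : ∀ n j, j ≠ n → LPvec X0 X1 m (χ (A n)) j ≤ r n j) (hr0 : ∀ n j, 0 ≤ r n j)
    (hr : ∀ n, Summable (r n)) (hrsum : ∀ n, ∑' j, r n j ≤ d n * ε n) :
    (∀ n, 0 < E.N (LPvec X0 X1 m (χ (A n)))) ∧ ∀ c : ℕ →₀ ℝ,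
      12⁻¹ * E.N c ≤ E.N (LPvec X0 X1 m fun t =>
          ∑ n ∈ c.support, c n / E.N (LPvec X0 X1 m (χ (A n))) * (χ (A n)) t) ∧
      E.N (LPvec X0 X1 m fun t =>
          ∑ n ∈ c.support, c n / E.N (LPvec X0 X1 m (χ (A n))) * (χ (A n)) t) ≤ 12 * E.N c := by
  set u := fun n => LPvec X0 X1 m (χ (A n))
  set w := fun n => E.N (u n)
  have hα : ∀ j, 0 ≤ (m j)⁻¹ := fun j => inv_nonneg.2 (hm j).le
  have hrow := E.norm_mem_Icc_of_diag_dominant (u := u) (fun n j => Kfun_nonneg (hα j) (hm j).le)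
    hε0 hε hεsum hdiag_ge hdiag_le hoff hr0 hr hrsum
  have hw : ∀ n, 0 < w n := fun n => (div_pos (hd n) (by norm_num)).trans_le (hrow n).1
  refine ⟨hw, fun c => ?_⟩
  set V := LPvec X0 X1 m fun t => ∑ n ∈ c.support, c n / w n * (χ (A n)) t
  have habs : ∀ n, |c n / w n| = |c n| / w n := fun n => by rw [abs_div, abs_of_pos (hw n)]
  have hV0 : ∀ j, 0 ≤ V j := fun j => Kfun_nonneg (hα j) (hm j).le
  have hVle : ∀ j, V j ≤ ∑ n ∈ c.support, |c n| * (u n j / w n) := fun j =>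
    (Kfun_sum_indicator_le c.support _ (hα j) (hm j).le fun n _ => hA0 n).trans_eq
      (Finset.sum_congr rfl fun n _ => by rw [habs, div_mul_eq_mul_div, mul_div_assoc]; rfl)
  obtain ⟨hVmem, hVnorm⟩ := E.norm_le_of_le_sum_mul c hV0 hVle (M := 8) (by norm_num)
    (fun n => by rw [div_le_iff₀ (hw n)]; linarith [hdiag_le n, (hrow n).1])
    (fun n j hjn => div_le_div_of_nonneg_right (hoff n j hjn) (hw n).le)
    (fun n j => div_nonneg (hr0 n j) (hw n).le) (fun n => (hr n).div_const _)
    (ε := fun n => 8 * ε n) (fun n => by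
      rw [tsum_div_const, div_le_iff₀ (hw n)]
      nlinarith [hrsum n, (hrow n).1, hε0 n]) (hε.mul_left 8)
  refine ⟨E.mul_norm_le_of_mul_abs_le (E.finsupp_mem c) hVmem (by norm_num) fun j => ?_,
    hVnorm.trans (by rw [tsum_mul_left]; nlinarith [E.nonneg c])⟩
  by_cases hj : j ∈ c.support
  · have hlow := abs_mul_Kfun_indicator_le_sum (X1 := X1) c.support (fun n => c n / w n)
      (hα j) (hm j).le hAm hAdisj (fun n _ => hA0 n) hj
    rw [habs, div_mul_eq_mul_div, div_le_iff₀ (hw j)] at hlow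
    change |c j| * u j j ≤ V j * w j at hlow
    have := mul_le_mul_of_nonneg_left (hdiag_ge j) (abs_nonneg (c j))
    have := mul_le_mul_of_nonneg_left (hrow j).2 (abs_nonneg (c j))
    rw [abs_of_nonneg (hV0 j)]
    exact le_of_mul_le_mul_right (by linarith : 12⁻¹ * |c j| * w j ≤ V j * w j) (hw j)
  · simp [Finsupp.notMem_support_iff.1 hj]

def RapidGrowth (m : ℕ → ℝ) : Prop :=
  ∀ n, (m n)⁻¹ * ∑ i ∈ Finset.range n, m i + m n * ∑' i : ℕ, (m (n + 1 + i))⁻¹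
    < (2:ℝ) ^ (-(n:ℤ) - 2)

/-- `fund X0 t * offDiagBound m n j` bounds `k(m_j⁻¹, m_j, χ_A)` for `j ≠ n` when `|A| = t` and
`fund X1 t ≤ m_n⁻² * fund X0 t`: through the `X1`-norm for `j < n`, the `X0`-norm for `j > n`. -/
def offDiagBound (m : ℕ → ℝ) (n j : ℕ) : ℝ :=
  (if j < n then m j / m n ^ 2 else 0) + if n < j then (m j)⁻¹ else 0

theorem hasSum_two_zpow_neg_sub_two : HasSum (fun n : ℕ => (2:ℝ) ^ (-(n:ℤ) - 2)) (1 / 2) := by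
  convert hasSum_geometric_two' (1 / 2) using 2 with n
  rw [zpow_sub₀ two_ne_zero, zpow_neg, zpow_natCast]
  ring

section Parameters

variable {m : ℕ → ℝ}

theorem RapidGrowth.tsum_inv_le_one (hgrow : RapidGrowth m) (hm : ∀ i, 0 < m i) (hm0 : 2 ≤ m 0)
    (hmsum : Summable fun i => (m i)⁻¹) : ∑' i, (m i)⁻¹ ≤ 1 := by
  have h := hgrow 0
  simp only [Finset.range_zero, Finset.sum_empty, mul_zero, zero_add, CharP.cast_eq_zero, neg_zero,
    zero_sub] at h
  have htail : 0 ≤ ∑' i, (m (1 + i))⁻¹ := tsum_nonneg fun i => (inv_pos.2 (hm _)).le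
  rw [hmsum.tsum_eq_zero_add]
  simp only [add_comm _ 1]
  have : (m 0)⁻¹ ≤ 1 / 2 := by rw [inv_le_comm₀ (by linarith) (by norm_num)]; linarith
  norm_num at h
  nlinarith

theorem summable_offDiagBound (hmsum : Summable fun i => (m i)⁻¹) (n : ℕ) :
    Summable (offDiagBound m n) := by
  refine Summable.add (summable_of_ne_finset_zero (s := Finset.range n) fun j hj => ?_) ?_
  · simp_all
  · exact hmsum.indicator {j | n < j} |>.congr fun j => by simp [indicator_apply]

theorem mul_tsum_offDiagBound {n : ℕ} (hmn : m n ≠ 0) (hmsum : Summable fun i => (m i)⁻¹) :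
    m n * ∑' j, offDiagBound m n j
      = (m n)⁻¹ * ∑ i ∈ Finset.range n, m i + m n * ∑' i, (m (n + 1 + i))⁻¹ := by
  set f : ℕ → ℝ := fun j => if j < n then m j / m n ^ 2 else 0
  set g : ℕ → ℝ := fun j => if n < j then (m j)⁻¹ else 0
  have hg : Summable g := hmsum.indicator {j | n < j} |>.congr fun j => by simp [g, indicator_apply]
  have hf : ∑' j, f j = ∑ i ∈ Finset.range n, m i / m n ^ 2 := by
    rw [tsum_eq_sum (s := Finset.range n) fun j hj => by simp_all [f]]
    exact Finset.sum_congr rfl fun j hj => by simp_all [f]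
  have hg' : ∑' j, g j = ∑' i, (m (n + 1 + i))⁻¹ := by
    rw [← hg.sum_add_tsum_nat_add (n + 1), Finset.sum_eq_zero fun j hj => by
      simp only [Finset.mem_range] at hj; simp [g]; omega]
    simp only [zero_add, g]
    exact tsum_congr fun i => by rw [if_pos (by omega), add_comm i]
  have hsplit : ∑' j, offDiagBound m n j = ∑' j, f j + ∑' j, g j := Summable.tsum_add
    (summable_of_ne_finset_zero (s := Finset.range n) fun j hj => by simp_all [f]) hg
  rw [hsplit, hf, hg', ← Finset.sum_div]
  field_simp

theorem offDiagBound_nonneg (hm : ∀ i, 0 < m i) (n j : ℕ) : 0 ≤ offDiagBound m n j := by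
  have := hm j
  unfold offDiagBound
  split_ifs <;> positivity

theorem RapidGrowth.tsum_mul_offDiagBound_le (hgrow : RapidGrowth m) (hm : ∀ i, 0 < m i)
    (hmsum : Summable fun i => (m i)⁻¹) {φ : ℝ} (hφ : 0 ≤ φ) (n : ℕ) :
    ∑' j, φ * offDiagBound m n j ≤ (m n)⁻¹ * φ * 2 ^ (-(n:ℤ) - 2) := by
  rw [tsum_mul_left, mul_assoc, mul_left_comm]
  refine mul_le_mul_of_nonneg_left ?_ hφ
  rw [le_inv_mul_iff₀ (hm n), mul_tsum_offDiagBound (hm n).ne' hmsum]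
  exact (hgrow n).le

end Parameters

theorem LPvec_indicator_bounds {X0 X1 : RIS 𝕀} (hX0 : X0.Mem (χ 𝕀)) (hX1 : X1.Mem (χ 𝕀))
    {m : ℕ → ℝ} (hm : ∀ i, 0 < m i) {A : Set ℝ} (hA : MeasurableSet A) (hAI : A ⊆ 𝕀) {t : ℝ}
    (ht0 : 0 ≤ t) (ht1 : t ≤ 1) (hvol : volume A = ENNReal.ofReal t) {n : ℕ}
    (hlow : (m n ^ 2)⁻¹ / 2 * fund X0 t ≤ fund X1 t)
    (hhigh : fund X1 t ≤ (m n ^ 2)⁻¹ * fund X0 t) :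
    (m n)⁻¹ * fund X0 t / 8 ≤ LPvec X0.toBFL X1.toBFL m (χ A) n ∧
      LPvec X0.toBFL X1.toBFL m (χ A) n ≤ (m n)⁻¹ * fund X0 t ∧
      ∀ j, j ≠ n → LPvec X0.toBFL X1.toBFL m (χ A) j ≤ fund X0 t * offDiagBound m n j := by
  have hα : ∀ j, 0 ≤ (m j)⁻¹ := fun j => inv_nonneg.2 (hm j).le
  have hN0 := X0.norm_indicator_eq_fund hX0 hA hAI ht1 hvol
  have hN1 := X1.norm_indicator_eq_fund hX1 hA hAI ht1 hvol
  have hupper : ∀ j, LPvec X0.toBFL X1.toBFL m (χ A) j ≤ (m j)⁻¹ * fund X0 t := fun j =>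
    (Kfun_le_left (hα j) (hm j).le (X0.indicator_mem hX0 hA hAI)).trans_eq (by rw [hN0])
  refine ⟨?_, hupper n, fun j hjn => ?_⟩
  · have hK := min_div_four_le_Kfun_indicator hX0 hX1 hA hAI ht0 ht1 hvol (hα n) (hm n).le
    have hmin : (m n)⁻¹ * fund X0 t / 2 ≤ min ((m n)⁻¹ * fund X0 t) (m n * fund X1 t) := by
      refine le_min (by nlinarith [mul_nonneg (hα n) (fund_nonneg (X := X0) t)]) ?_
      calc (m n)⁻¹ * fund X0 t / 2 = m n * ((m n ^ 2)⁻¹ / 2 * fund X0 t) := by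
            field_simp [(hm n).ne']
        _ ≤ m n * fund X1 t := mul_le_mul_of_nonneg_left hlow (hm n).le
    exact le_trans (by linarith) hK
  · rcases lt_or_gt_of_ne hjn with h | h
    · calc Kfun X0.toBFL X1.toBFL (m j)⁻¹ (m j) (χ A) ≤ m j * X1.N (χ A) :=
            Kfun_le_right (hα j) (hm j).le (X1.indicator_mem hX1 hA hAI)
        _ ≤ m j * ((m n ^ 2)⁻¹ * fund X0 t) := by rw [hN1]; gcongr; exact (hm j).le
        _ = fund X0 t * offDiagBound m n j := by
            simp [offDiagBound, h, h.not_gt]; ring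
    · simpa [offDiagBound, h, h.not_gt, mul_comm] using hupper j

/-- Proposition 1 of the paper. In the Lions–Peetre space
`W = W_E^K(X₀,X₁)` (with `X₀ ⊂ X₁` strictly embedded r.i. spaces on `[0,1]`, fundamental
functions normalized at `1`, and parameters satisfying the rapid growth condition) there
exist pairwise disjoint measurable sets `A_n ⊆ [0,1]` such that the normalized
characteristic functions `χ_{A_n}/‖χ_{A_n}‖_W` form a sequence equivalent in `W` to the
basis `{e_n}` of `E`. -/
theorem stmt10 (X0 X1 : RIS (Set.Icc (0:ℝ) 1))
    (hemb : ∀ f, X0.Mem f → X1.Mem f ∧ X1.N f ≤ X0.N f)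
    (hstrict : StrictEmb X0 X1)
    (hconst : X0.Mem ((Set.Icc (0:ℝ) 1).indicator fun _ => (1:ℝ)))
    (h0 : fund X0 1 = 1) (h1 : fund X1 1 = 1)
    (m : ℕ → ℝ) (hmono : StrictMono m) (hm0 : 2 ≤ m 0)
    (hmsum : Summable fun i => (m i)⁻¹)
    (hgrow : ∀ n, (m n)⁻¹ * ∑ i ∈ Finset.range n, m i
        + m n * ∑' i : ℕ, (m (n + 1 + i))⁻¹ < (2:ℝ) ^ (-(n:ℤ) - 2))
    (E : SeqSpace) :
    ∃ A : ℕ → Set ℝ, (∀ n, MeasurableSet (A n)) ∧ (∀ n, A n ⊆ Set.Icc 0 1) ∧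
      (Pairwise fun i j => Disjoint (A i) (A j)) ∧
      (∀ n, 0 < E.N (LPvec X0.toBFL X1.toBFL m ((A n).indicator fun _ => (1:ℝ)))) ∧
      ∃ C : ℝ, 0 < C ∧ ∀ c : ℕ →₀ ℝ,
        C⁻¹ * E.N (fun n => c n)
            ≤ E.N (LPvec X0.toBFL X1.toBFL m (fun t => ∑ n ∈ c.support,
                (c n / E.N (LPvec X0.toBFL X1.toBFL m ((A n).indicator fun _ => (1:ℝ))))
                  * (A n).indicator (fun _ => (1:ℝ)) t)) ∧
        E.N (LPvec X0.toBFL X1.toBFL m (fun t => ∑ n ∈ c.support,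
                (c n / E.N (LPvec X0.toBFL X1.toBFL m ((A n).indicator fun _ => (1:ℝ))))
                  * (A n).indicator (fun _ => (1:ℝ)) t))
            ≤ C * E.N (fun n => c n) := by
  have hX1 := (hemb _ hconst).1
  have hm2 : ∀ n, 2 ≤ m n := fun n => hm0.trans (hmono.monotone n.zero_le)
  have hm : ∀ n, 0 < m n := fun n => two_pos.trans_le (hm2 n)
  obtain ⟨t, ht0, ht1, htm, hlow, hhigh⟩ := hstrict.exists_seq_fund_ratio hconst hX1 h0 h1 hm2
  have ht : Summable t := .of_nonneg_of_le (fun n => (ht0 n).le) htm hmsum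
  obtain ⟨A, hAm, hAI, hAdisj, hvol⟩ := exists_pairwise_disjoint_volume_eq (fun n => (ht0 n).le) ht
    ((ht.tsum_le_tsum htm hmsum).trans (RapidGrowth.tsum_inv_le_one hgrow hm hm0 hmsum))
  have hK := fun n => LPvec_indicator_bounds hconst hX1 hm (hAm n) (hAI n) (ht0 n).le (ht1 n).le
    (hvol n) (hlow n) (hhigh n)
  obtain ⟨hpos, hequiv⟩ := LPvec_indicator_equiv_basis E hm hAm hAdisj
    (fun n => X0.indicator_mem hconst (hAm n) (hAI n))
    (fun n => mul_pos (inv_pos.2 (hm n)) (fund_pos hconst h0 (ht0 n) (ht1 n).le))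
    (fun n => by positivity) hasSum_two_zpow_neg_sub_two.summable
    hasSum_two_zpow_neg_sub_two.tsum_eq.le
    (fun n => (hK n).1) (fun n => (hK n).2.1) (fun n => (hK n).2.2)
    (fun n j => mul_nonneg (fund_nonneg _) (offDiagBound_nonneg hm n j))
    (fun n => (summable_offDiagBound hmsum n).mul_left _)
    fun n => RapidGrowth.tsum_mul_offDiagBound_le hgrow hm hmsum (fund_nonneg _) n
  exact ⟨A, hAm, hAI, hAdisj, hpos, 12, by norm_num, hequiv⟩
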